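/- arXiv:2403.13525 — 2 statements merged into one kernel-verified Lean document; each statement's English description precedes it below -/
import Mathlib

section
/- The function F_θ(x) = (1/2)(1 - tanh(θ)·tanh(xθ/2)) with θ > 0 satisfies the fixed-point-type identity F_θ(x-2) = 1 - α'/F_θ(x) for all x, where α' = 1/(4·cosh²(θ)). -/
/-- `F_θ(x) = (1/2)(1 - tanh(θ)·tanh(xθ/2))`. -/
noncomputable def Ftheta (θ x : ℝ) : ℝ :=
  (1 / 2) * (1 - Real.tanh θ * Real.tanh (x * θ / 2))

lemma Ftheta_eq (θ x : ℝ) :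
    Ftheta θ x = Real.cosh (x * θ / 2 - θ) / (2 * Real.cosh θ * Real.cosh (x * θ / 2)) := by
  have h1 := (Real.cosh_pos (x := θ)).ne'
  have h2 := (Real.cosh_pos (x := x * θ / 2)).ne'
  unfold Ftheta
  rw [Real.tanh_eq_sinh_div_cosh, Real.tanh_eq_sinh_div_cosh, Real.cosh_sub]
  field_simp

theorem stmt_6 (θ : ℝ) (hθ : 0 < θ) (α' : ℝ) (hα : α' = 1 / (4 * Real.cosh θ ^ 2)) :
    ∀ x : ℝ, Ftheta θ (x - 2) = 1 - α' / Ftheta θ x := by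
  intro x
  have h1 := (Real.cosh_pos (x := θ)).ne'
  have h2 := (Real.cosh_pos (x := x * θ / 2)).ne'
  have h3 := (Real.cosh_pos (x := x * θ / 2 - θ)).ne'
  have h4 := (Real.cosh_pos (x := (x - 2) * θ / 2 - θ)).ne'
  rw [Ftheta_eq, Ftheta_eq, hα]
  have he : (x - 2) * θ / 2 = x * θ / 2 - θ := by ring
  rw [he]
  have he2 : x * θ / 2 - θ - θ = x * θ / 2 - 2 * θ := by ring
  rw [he2]
  have key : Real.cosh (x * θ / 2 - 2 * θ)
      = 2 * Real.cosh θ * Real.cosh (x * θ / 2 - θ) - Real.cosh (x * θ / 2) := by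
    rw [Real.cosh_sub, Real.cosh_sub, Real.cosh_two_mul, Real.sinh_two_mul]
    linear_combination -Real.cosh (x * θ / 2) * Real.cosh_sq_sub_sinh_sq θ
  rw [key]
  field_simp
  ring
end

section
/- Assume f(x,y) > 0 is symmetric and increasing in each variable. Let G be a connected graph containing a cycle C. Then there exists an edge e of C such that ρ_f(G_e) ≤ ρ_f(G), where G_e is the graph obtained by subdividing e. -/
open scoped Classical

/-- Spectral radius of a real square matrix: the largest modulus of a complex eigenvalue. -/
noncomputable def specRad {n : Type*} [Fintype n] [DecidableEq n] (A : Matrix n n ℝ) : ℝ :=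
  sSup {r : ℝ | ∃ μ : ℂ, (A.map (Complex.ofReal ·)).charpoly.IsRoot μ ∧ r = ‖μ‖}

/-- The degree-based weighted (`f`-)adjacency matrix of a graph. -/
noncomputable def fAdj {V : Type*} [Fintype V] [DecidableEq V] (G : SimpleGraph V)
    (f : ℝ → ℝ → ℝ) : Matrix V V ℝ :=
  fun i j => if G.Adj i j then f (G.degree i) (G.degree j) else 0

/-- Subdividing the edge `uv`: a new vertex `Sum.inr ()` is joined to `u` and `v`,
and the edge `uv` is removed. -/
def subdivide {V : Type*} (G : SimpleGraph V) (u v : V) : SimpleGraph (V ⊕ Unit) :=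
  SimpleGraph.fromRel (fun a b =>
    match a, b with
    | Sum.inl a, Sum.inl b => G.Adj a b ∧ ¬(a = u ∧ b = v) ∧ ¬(a = v ∧ b = u)
    | Sum.inl a, Sum.inr _ => a = u ∨ a = v
    | _, _ => False)

open Polynomial Matrix

lemma eval_charpoly' {n : Type*} [Fintype n] [DecidableEq n] {R : Type*} [CommRing R]
    (M : Matrix n n R) (r : R) :
    M.charpoly.eval r = (Matrix.scalar n r - M).det := by
  rw [Matrix.charpoly, ← Polynomial.coe_evalRingHom, RingHom.map_det]
  congr 1
  ext i j
  by_cases h : i = j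
  · subst h; simp [Matrix.charmatrix_apply, Matrix.scalar_apply, Matrix.diagonal_apply]
  · simp [Matrix.charmatrix_apply_ne _ _ _ h, Matrix.scalar_apply, Matrix.diagonal_apply, h]

lemma root_eigen {n : Type*} [Fintype n] [DecidableEq n] (M : Matrix n n ℂ) (μ : ℂ)
    (h : M.charpoly.IsRoot μ) : ∃ v : n → ℂ, v ≠ 0 ∧ M *ᵥ v = μ • v := by
  have hdet : (Matrix.scalar n μ - M).det = 0 := by rw [← eval_charpoly']; exact h
  obtain ⟨v, hv0, hv⟩ := Matrix.exists_mulVec_eq_zero_iff.2 hdet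
  refine ⟨v, hv0, ?_⟩
  have hscal : Matrix.scalar n μ *ᵥ v = μ • v := by
    rw [Matrix.scalar_apply, ← Matrix.smul_one_eq_diagonal, Matrix.smul_mulVec,
      Matrix.one_mulVec]
  rw [Matrix.sub_mulVec, hscal] at hv
  linear_combination (norm := module) -hv

lemma mulVec_apply' {n : Type*} [Fintype n] (B : Matrix n n ℝ) (y : n → ℝ) (i : n) :
    (B *ᵥ y) i = ∑ j, B i j * y j := by
  simp [Matrix.mulVec, dotProduct]

lemma quad_bound {n : Type*} [Fintype n] (B : Matrix n n ℝ)
    (hsym : ∀ i j, B i j = B j i) (hnn : ∀ i j, 0 ≤ B i j)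
    (ρ : ℝ) (y : n → ℝ) (hy : ∀ i, 0 < y i)
    (hle : ∀ i, (B *ᵥ y) i ≤ ρ * y i) (s : n → ℝ) :
    ∑ i, ∑ j, B i j * s i * s j ≤ ρ * ∑ i, s i ^ 2 := by
  set t : n → ℝ := fun i => s i / y i with ht
  have hts : ∀ i, s i = y i * t i := by
    intro i; rw [ht]; rw [eq_comm, mul_comm, div_mul_cancel₀ _ (hy i).ne']
  have h1 : ∑ i, ∑ j, (B i j * y i * y j) * (t i ^ 2)
      = ∑ i, t i ^ 2 * (y i * (B *ᵥ y) i) := by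
    refine Finset.sum_congr rfl fun i _ => ?_
    rw [mulVec_apply', Finset.mul_sum, Finset.mul_sum]
    exact Finset.sum_congr rfl fun j _ => by ring
  have h2 : ∑ i, ∑ j, (B i j * y i * y j) * (t j ^ 2)
      = ∑ i, t i ^ 2 * (y i * (B *ᵥ y) i) := by
    rw [Finset.sum_comm, ← h1]
    exact Finset.sum_congr rfl fun j _ => Finset.sum_congr rfl fun i _ => by rw [hsym i j]; ring
  have hstep : ∑ i, ∑ j, B i j * s i * s j
      ≤ ∑ i, ∑ j, (B i j * y i * y j) * ((t i ^ 2 + t j ^ 2) / 2) := by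
    refine Finset.sum_le_sum fun i _ => Finset.sum_le_sum fun j _ => ?_
    have hby : 0 ≤ B i j * y i * y j := by
      have := hnn i j; have := (hy i).le; have := (hy j).le; positivity
    have hamgm : t i * t j ≤ (t i ^ 2 + t j ^ 2) / 2 := by
      have := two_mul_le_add_sq (t i) (t j); linarith
    calc B i j * s i * s j = (B i j * y i * y j) * (t i * t j) := by
          rw [hts i, hts j]; ring
      _ ≤ (B i j * y i * y j) * ((t i ^ 2 + t j ^ 2) / 2) :=
          mul_le_mul_of_nonneg_left hamgm hby
  have hsplit : ∑ i, ∑ j, (B i j * y i * y j) * ((t i ^ 2 + t j ^ 2) / 2)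
      = ∑ i, t i ^ 2 * (y i * (B *ᵥ y) i) := by
    calc ∑ i, ∑ j, (B i j * y i * y j) * ((t i ^ 2 + t j ^ 2) / 2)
        = ∑ i, ∑ j, ((B i j * y i * y j) * (t i ^ 2) / 2
            + (B i j * y i * y j) * (t j ^ 2) / 2) :=
          Finset.sum_congr rfl fun i _ => Finset.sum_congr rfl fun j _ => by ring
      _ = (∑ i, ∑ j, (B i j * y i * y j) * (t i ^ 2)) / 2
            + (∑ i, ∑ j, (B i j * y i * y j) * (t j ^ 2)) / 2 := by
          simp_rw [Finset.sum_add_distrib, ← Finset.sum_div]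
      _ = ∑ i, t i ^ 2 * (y i * (B *ᵥ y) i) := by rw [h1, h2]; ring
  have hfin : ∑ i, t i ^ 2 * (y i * (B *ᵥ y) i) ≤ ρ * ∑ i, s i ^ 2 := by
    rw [Finset.mul_sum]
    refine Finset.sum_le_sum fun i _ => ?_
    have h3 : t i ^ 2 * (y i * (B *ᵥ y) i) ≤ t i ^ 2 * (y i * (ρ * y i)) := by
      have h4 : 0 ≤ t i ^ 2 * y i := by have := (hy i).le; positivity
      calc t i ^ 2 * (y i * (B *ᵥ y) i) = (t i ^ 2 * y i) * (B *ᵥ y) i := by ring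
        _ ≤ (t i ^ 2 * y i) * (ρ * y i) := mul_le_mul_of_nonneg_left (hle i) h4
        _ = t i ^ 2 * (y i * (ρ * y i)) := by ring
    calc t i ^ 2 * (y i * (B *ᵥ y) i) ≤ t i ^ 2 * (y i * (ρ * y i)) := h3
      _ = ρ * s i ^ 2 := by rw [hts i]; ring
  calc ∑ i, ∑ j, B i j * s i * s j
      ≤ ∑ i, ∑ j, (B i j * y i * y j) * ((t i ^ 2 + t j ^ 2) / 2) := hstep
    _ = ∑ i, t i ^ 2 * (y i * (B *ᵥ y) i) := hsplit
    _ ≤ ρ * ∑ i, s i ^ 2 := hfin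

lemma abs_root_le {n : Type*} [Fintype n] [DecidableEq n] (B : Matrix n n ℝ)
    (hsym : ∀ i j, B i j = B j i) (hnn : ∀ i j, 0 ≤ B i j)
    (ρ : ℝ) (hρ : 0 ≤ ρ) (y : n → ℝ) (hy : ∀ i, 0 < y i)
    (hle : ∀ i, (B *ᵥ y) i ≤ ρ * y i)
    (μ : ℂ) (hμ : ((B.map (Complex.ofReal ·)).charpoly).IsRoot μ) :
    ‖μ‖ ≤ ρ := by
  obtain ⟨v, hv0, hMv⟩ := root_eigen _ μ hμ
  set s : n → ℝ := fun i => ‖v i‖ with hs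
  have hs0 : ∀ i, 0 ≤ s i := fun i => norm_nonneg _
  have hstep : ∀ i, ‖μ‖ * s i ≤ (B *ᵥ s) i := by
    intro i
    have h1 : μ * v i = ∑ j, (B.map (Complex.ofReal ·)) i j * v j := by
      have h := congrFun hMv i
      simp only [Matrix.mulVec, dotProduct, Pi.smul_apply, smul_eq_mul] at h
      exact h.symm
    calc ‖μ‖ * s i = ‖∑ j, (B.map (Complex.ofReal ·)) i j * v j‖ := by
          rw [← h1, norm_mul]
      _ ≤ ∑ j, ‖(B.map (Complex.ofReal ·)) i j * v j‖ :=
          norm_sum_le _ _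
      _ = ∑ j, B i j * s j := by
          refine Finset.sum_congr rfl fun j _ => ?_
          rw [norm_mul]
          simp [Matrix.map_apply, Complex.norm_real, abs_of_nonneg (hnn i j), hs]
      _ = (B *ᵥ s) i := (mulVec_apply' B s i).symm
  have hex : ∃ i, v i ≠ 0 := by
    by_contra h
    push_neg at h
    exact hv0 (funext fun i => h i)
  obtain ⟨i0, hi0⟩ := hex
  have hpos : 0 < ∑ i, s i ^ 2 := by
    have : 0 < s i0 ^ 2 := by
      have : 0 < s i0 := by
        simp only [hs]
        exact norm_pos_iff.mpr hi0
      positivity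
    refine Finset.sum_pos' (fun i _ => by positivity) ⟨i0, Finset.mem_univ _, this⟩
  have h2 : ‖μ‖ * ∑ i, s i ^ 2 ≤ ∑ i, (B *ᵥ s) i * s i := by
    rw [Finset.mul_sum]
    refine Finset.sum_le_sum fun i _ => ?_
    calc ‖μ‖ * s i ^ 2 = (‖μ‖ * s i) * s i := by ring
      _ ≤ (B *ᵥ s) i * s i := mul_le_mul_of_nonneg_right (hstep i) (hs0 i)
  have h3 : ∑ i, (B *ᵥ s) i * s i = ∑ i, ∑ j, B i j * s i * s j := by
    refine Finset.sum_congr rfl fun i _ => ?_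
    rw [mulVec_apply', Finset.sum_mul]
    exact Finset.sum_congr rfl fun j _ => by ring
  have h4 := quad_bound B hsym hnn ρ y hy hle s
  have h5 : ‖μ‖ * (∑ i, s i ^ 2) ≤ ρ * ∑ i, s i ^ 2 := by
    calc ‖μ‖ * ∑ i, s i ^ 2 ≤ ∑ i, (B *ᵥ s) i * s i := h2
      _ = ∑ i, ∑ j, B i j * s i * s j := h3
      _ ≤ ρ * ∑ i, s i ^ 2 := h4
  exact le_of_mul_le_mul_left (by rwa [mul_comm (‖μ‖), mul_comm ρ] at h5) hpos

lemma specRad_le_of {n : Type*} [Fintype n] [DecidableEq n] (B : Matrix n n ℝ)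
    (hsym : ∀ i j, B i j = B j i) (hnn : ∀ i j, 0 ≤ B i j)
    (ρ : ℝ) (hρ : 0 ≤ ρ) (y : n → ℝ) (hy : ∀ i, 0 < y i)
    (hle : ∀ i, (B *ᵥ y) i ≤ ρ * y i) : specRad B ≤ ρ := by
  refine Real.sSup_le ?_ hρ
  rintro r ⟨μ, h1, rfl⟩
  exact abs_root_le B hsym hnn ρ hρ y hy hle μ h1

lemma le_specRad_of {n : Type*} [Fintype n] [DecidableEq n] (A : Matrix n n ℝ)
    (ρ₀ : ℝ) (h0 : 0 ≤ ρ₀) (x : n → ℝ) (hx : x ≠ 0) (hAx : A *ᵥ x = ρ₀ • x) :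
    ρ₀ ≤ specRad A := by
  have hroot : A.charpoly.IsRoot ρ₀ := by
    rw [Polynomial.IsRoot, eval_charpoly']
    refine Matrix.exists_mulVec_eq_zero_iff.1 ⟨x, hx, ?_⟩
    rw [Matrix.sub_mulVec, hAx, Matrix.scalar_apply, ← Matrix.smul_one_eq_diagonal,
      Matrix.smul_mulVec, Matrix.one_mulVec, sub_self]
  have hmap : (A.map (Complex.ofReal ·)).charpoly = A.charpoly.map Complex.ofRealHom :=
    Matrix.charpoly_map A Complex.ofRealHom
  have hroot' : (A.map (Complex.ofReal ·)).charpoly.IsRoot ((ρ₀ : ℝ) : ℂ) := by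
    rw [hmap, Polynomial.IsRoot, Polynomial.eval_map]
    show Polynomial.eval₂ Complex.ofRealHom (Complex.ofRealHom ρ₀) A.charpoly = 0
    rw [Polynomial.eval₂_at_apply]
    rw [Polynomial.IsRoot] at hroot
    simp [hroot]
  have hq : (A.map (Complex.ofReal ·)).charpoly ≠ 0 := (Matrix.charpoly_monic _).ne_zero
  have hfin : {r : ℝ | ∃ μ : ℂ, (A.map (Complex.ofReal ·)).charpoly.IsRoot μ
      ∧ r = ‖μ‖}.Finite := by
    have h1 : {μ : ℂ | (A.map (Complex.ofReal ·)).charpoly.IsRoot μ}.Finite :=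
      Polynomial.finite_setOf_isRoot hq
    refine (h1.image (fun μ : ℂ => ‖μ‖)).subset ?_
    rintro r ⟨μ, hμ, rfl⟩
    exact ⟨μ, hμ, rfl⟩
  refine le_csSup hfin.bddAbove ?_
  exact ⟨((ρ₀ : ℝ) : ℂ), hroot', by rw [Complex.norm_real, Real.norm_of_nonneg h0]⟩

section fAdjBasic

variable {V : Type*} [Fintype V] [DecidableEq V] (G : SimpleGraph V)
  (f : ℝ → ℝ → ℝ)

lemma fAdj_symm (hsymm : ∀ x y : ℝ, f x y = f y x) :
    ∀ i j, fAdj G f i j = fAdj G f j i := by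
  intro i j
  unfold fAdj
  by_cases h : G.Adj i j
  · rw [if_pos h, if_pos h.symm, hsymm]
  · rw [if_neg h, if_neg fun h' => h h'.symm]

lemma fAdj_pos (hpos : ∀ x y : ℝ, 0 < x → 0 < y → 0 < f x y)
    {i j : V} (h : G.Adj i j) : 0 < fAdj G f i j := by
  have hdi : 0 < G.degree i := (G.degree_pos_iff_exists_adj i).2 ⟨j, h⟩
  have hdj : 0 < G.degree j := (G.degree_pos_iff_exists_adj j).2 ⟨i, h.symm⟩
  unfold fAdj
  rw [if_pos h]
  exact hpos _ _ (by exact_mod_cast hdi) (by exact_mod_cast hdj)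

lemma fAdj_nonneg (hpos : ∀ x y : ℝ, 0 < x → 0 < y → 0 < f x y) :
    ∀ i j, 0 ≤ fAdj G f i j := by
  intro i j
  by_cases h : G.Adj i j
  · exact (fAdj_pos G f hpos h).le
  · unfold fAdj; rw [if_neg h]

end fAdjBasic

lemma exists_perron {V : Type*} [Fintype V] [DecidableEq V] [Nonempty V]
    (G : SimpleGraph V) (hconn : G.Connected)
    (f : ℝ → ℝ → ℝ)
    (hpos : ∀ x y : ℝ, 0 < x → 0 < y → 0 < f x y)
    (hsymm : ∀ x y : ℝ, f x y = f y x) :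
    ∃ (ρ₀ : ℝ) (x : V → ℝ), 0 ≤ ρ₀ ∧ (∀ i, 0 < x i) ∧ fAdj G f *ᵥ x = ρ₀ • x := by
  classical
  set A := fAdj G f with hA
  have hsA : ∀ i j, A i j = A j i := fAdj_symm G f hsymm
  have hnn : ∀ i j, 0 ≤ A i j := fAdj_nonneg G f hpos
  have hherm : A.IsHermitian := by
    ext i j
    simp only [Matrix.conjTranspose_apply, RCLike.star_def, starRingEnd_apply, star_trivial]
    exact hsA j i
  set T₀ := Matrix.toEuclideanLin A with hT₀
  have hTsym : T₀.IsSymmetric := Matrix.isHermitian_iff_isSymmetric.mp hherm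
  set T : EuclideanSpace ℝ V →L[ℝ] EuclideanSpace ℝ V :=
    LinearMap.toContinuousLinearMap T₀ with hT
  have hTsa : IsSelfAdjoint T := by
    rw [ContinuousLinearMap.isSelfAdjoint_iff_isSymmetric]
    simpa [hT] using hTsym
  -- T acts as mulVec
  have hTapp : ∀ z : EuclideanSpace ℝ V, ∀ i, (T z) i = (A *ᵥ z) i := by
    intro z i
    have : T z = Matrix.toEuclideanLin A z := rfl
    rw [this]
    rfl
  -- the Rayleigh function
  have hval : ∀ z : EuclideanSpace ℝ V,
      T.reApplyInnerSelf z = ∑ i, (A *ᵥ z) i * z i := by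
    intro z
    unfold ContinuousLinearMap.reApplyInnerSelf
    rw [PiLp.inner_apply]
    simp only [RCLike.inner_apply, starRingEnd_apply, star_trivial, RCLike.re_to_real]
    exact Finset.sum_congr rfl fun i _ => by rw [hTapp z i, mul_comm]
  have hcont : Continuous T.reApplyInnerSelf := by
    have : T.reApplyInnerSelf = fun z => (inner ℝ (T z) z : ℝ) := rfl
    rw [this]
    exact Continuous.inner T.continuous continuous_id
  haveI : Nontrivial (EuclideanSpace ℝ V) := by
    refine ⟨EuclideanSpace.single (Classical.arbitrary V) (1 : ℝ), 0, fun h => ?_⟩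
    have := congrFun (congrArg (fun z : EuclideanSpace ℝ V => (z : V → ℝ)) h)
      (Classical.arbitrary V)
    simp [EuclideanSpace.single_apply] at this
  have hsph : (Metric.sphere (0 : EuclideanSpace ℝ V) 1).Nonempty :=
    NormedSpace.sphere_nonempty.mpr zero_le_one
  have hcomp : IsCompact (Metric.sphere (0 : EuclideanSpace ℝ V) 1) :=
    isCompact_sphere _ _
  obtain ⟨x₀, hx₀s, hx₀max⟩ := hcomp.exists_isMaxOn hsph hcont.continuousOn
  have hx₀n : ‖x₀‖ = 1 := by simpa using hx₀s
  -- entrywise absolute value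
  set x₁ : EuclideanSpace ℝ V := WithLp.toLp 2 (fun i => |x₀ i| : V → ℝ) with hx₁
  have hx₁n : ‖x₁‖ = 1 := by
    rw [EuclideanSpace.norm_eq] at hx₀n ⊢
    convert hx₀n using 3 with i
    simp [hx₁, abs_abs]
  have hx₁s : x₁ ∈ Metric.sphere (0 : EuclideanSpace ℝ V) 1 := by
    simp [hx₁n]
  have hge : T.reApplyInnerSelf x₀ ≤ T.reApplyInnerSelf x₁ := by
    rw [hval, hval]
    have expand : ∀ z : EuclideanSpace ℝ V,
        ∑ i, (A *ᵥ z) i * z i = ∑ i, ∑ j, A i j * z j * z i := by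
      intro z
      refine Finset.sum_congr rfl fun i _ => ?_
      rw [mulVec_apply', Finset.sum_mul]
    rw [expand, expand]
    refine Finset.sum_le_sum fun i _ => Finset.sum_le_sum fun j _ => ?_
    calc A i j * x₀ j * x₀ i ≤ |A i j * x₀ j * x₀ i| := le_abs_self _
      _ = A i j * |x₀ j| * |x₀ i| := by
          rw [abs_mul, abs_mul, abs_of_nonneg (hnn i j)]
      _ = A i j * x₁ j * x₁ i := rfl
  have hx₁max : IsMaxOn T.reApplyInnerSelf (Metric.sphere (0 : EuclideanSpace ℝ V) ‖x₁‖) x₁ := by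
    rw [hx₁n]
    intro z hz
    exact le_trans (hx₀max hz) hge
  have hx₁0 : x₁ ≠ 0 := by
    intro h
    rw [h, norm_zero] at hx₁n
    exact zero_ne_one hx₁n
  have heig := hTsa.hasEigenvector_of_isMaxOn hx₁0 hx₁max
  set ρ₀ : ℝ := ⨆ z : { z : EuclideanSpace ℝ V // z ≠ 0 }, T.rayleighQuotient z with hρ₀
  have heq : ∀ i, (A *ᵥ (x₁ : V → ℝ)) i = ρ₀ * x₁ i := by
    intro i
    have h1 : (T : EuclideanSpace ℝ V →ₗ[ℝ] EuclideanSpace ℝ V) x₁ = ρ₀ • x₁ :=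
      Module.End.mem_eigenspace_iff.mp heig.1
    have h2 : (T x₁ : V → ℝ) i = (ρ₀ • x₁ : EuclideanSpace ℝ V) i := by
      rw [← h1]; rfl
    rw [← hTapp x₁ i, h2]
    rfl
  have hsum1 : ∑ i, x₁ i ^ 2 = 1 := by
    have h1 := hx₁n
    rw [EuclideanSpace.norm_eq] at h1
    have h3 : (0:ℝ) ≤ ∑ i, ‖x₁ i‖ ^ 2 := by positivity
    have h2 : ∑ i, ‖x₁ i‖ ^ 2 = 1 := by
      nlinarith [Real.sq_sqrt h3]
    simpa [Real.norm_eq_abs, sq_abs] using h2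
  have hρval : ρ₀ = T.reApplyInnerSelf x₁ := by
    rw [hval]
    calc ρ₀ = ρ₀ * ∑ i, x₁ i ^ 2 := by rw [hsum1, mul_one]
      _ = ∑ i, (A *ᵥ (x₁ : V → ℝ)) i * x₁ i := by
          rw [Finset.mul_sum]
          refine Finset.sum_congr rfl fun i _ => ?_
          rw [heq i]; ring
  have hρnn : 0 ≤ ρ₀ := by
    set w := Classical.arbitrary V with hw
    set e : EuclideanSpace ℝ V := EuclideanSpace.single w (1 : ℝ) with he
    have hes : e ∈ Metric.sphere (0 : EuclideanSpace ℝ V) 1 := by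
      simp [he, EuclideanSpace.norm_single]
    have hev : T.reApplyInnerSelf e = 0 := by
      rw [hval]
      have h1 : ∀ i, (e : V → ℝ) i = if i = w then 1 else 0 := by
        intro i; simp [he, EuclideanSpace.single_apply]
      have h2 : ∀ i, (A *ᵥ (e : V → ℝ)) i * e i
          = if i = w then (A *ᵥ (e : V → ℝ)) w else 0 := by
        intro i
        by_cases hiw : i = w
        · subst hiw; rw [h1]; simp
        · rw [h1]; simp [hiw]
      rw [Finset.sum_congr rfl fun i _ => h2 i, Finset.sum_ite_eq' Finset.univ w]
      simp only [Finset.mem_univ, if_true]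
      rw [mulVec_apply']
      have h3 : ∀ j, A w j * (e : V → ℝ) j = if j = w then A w w else 0 := by
        intro j
        by_cases hjw : j = w
        · subst hjw; rw [h1]; simp
        · rw [h1]; simp [hjw]
      rw [Finset.sum_congr rfl fun j _ => h3 j, Finset.sum_ite_eq' Finset.univ w]
      simp only [Finset.mem_univ, if_true]
      unfold A
      unfold fAdj
      rw [if_neg (G.irrefl)]
    have : (0:ℝ) = T.reApplyInnerSelf e := hev.symm
    rw [hρval]
    calc (0:ℝ) = T.reApplyInnerSelf e := hev.symm
      _ ≤ T.reApplyInnerSelf x₀ := hx₀max hes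
      _ ≤ T.reApplyInnerSelf x₁ := hge
  have hx₁nn : ∀ i, 0 ≤ x₁ i := fun i => abs_nonneg _
  have hzero : ∀ i, x₁ i = 0 → ∀ j, G.Adj i j → x₁ j = 0 := by
    intro i hi j hij
    have h0 : (A *ᵥ (x₁ : V → ℝ)) i = 0 := by rw [heq i, hi, mul_zero]
    rw [mulVec_apply'] at h0
    have hnn' : ∀ k ∈ Finset.univ, 0 ≤ A i k * x₁ k :=
      fun k _ => mul_nonneg (hnn i k) (hx₁nn k)
    have hterm := (Finset.sum_eq_zero_iff_of_nonneg hnn').mp h0 j (Finset.mem_univ j)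
    rcases mul_eq_zero.mp hterm with h | h
    · exact absurd h (fAdj_pos G f hpos hij).ne'
    · exact h
  have hreach : ∀ i j : V, G.Reachable i j → x₁ i = 0 → x₁ j = 0 := by
    intro i j hr
    obtain ⟨w⟩ := hr
    induction w with
    | nil => exact id
    | cons h p ih => exact fun h0 => ih (hzero _ h0 _ h)
  have hne : ∃ i, x₁ i ≠ 0 := by
    by_contra h
    push_neg at h
    exact hx₁0 (PiLp.ext fun i => by simp [h i])
  obtain ⟨i0, hi0⟩ := hne
  have hall : ∀ i, 0 < x₁ i := by
    intro i
    rcases (hx₁nn i).lt_or_eq with h | h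
    · exact h
    · exact absurd (hreach i i0 (hconn.preconnected i i0) h.symm) hi0
  exact ⟨ρ₀, (x₁ : V → ℝ), hρnn, hall, funext fun i => by rw [heq i]; rfl⟩

section Subdivide

variable {V : Type*} (G : SimpleGraph V) (u v : V)

lemma subdivide_adj_inl_inl (a b : V) :
    (subdivide G u v).Adj (Sum.inl a) (Sum.inl b) ↔
      G.Adj a b ∧ ¬(a = u ∧ b = v) ∧ ¬(a = v ∧ b = u) := by
  show (SimpleGraph.fromRel _).Adj _ _ ↔ _
  rw [SimpleGraph.fromRel_adj]
  constructor
  · rintro ⟨hne, h | h⟩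
    · exact h
    · exact ⟨h.1.symm, fun hh => h.2.2 ⟨hh.2, hh.1⟩, fun hh => h.2.1 ⟨hh.2, hh.1⟩⟩
  · rintro ⟨hab, h1, h2⟩
    exact ⟨fun hh => hab.ne (Sum.inl_injective hh), Or.inl ⟨hab, h1, h2⟩⟩

lemma subdivide_adj_inl_inr (a : V) (t : Unit) :
    (subdivide G u v).Adj (Sum.inl a) (Sum.inr t) ↔ a = u ∨ a = v := by
  show (SimpleGraph.fromRel _).Adj _ _ ↔ _
  rw [SimpleGraph.fromRel_adj]
  constructor
  · rintro ⟨-, h | h⟩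
    · exact h
    · exact absurd h not_false
  · intro h
    exact ⟨by simp, Or.inl h⟩

lemma subdivide_adj_inr_inr (t t' : Unit) :
    ¬ (subdivide G u v).Adj (Sum.inr t) (Sum.inr t') := by
  show ¬ (SimpleGraph.fromRel _).Adj _ _
  rw [SimpleGraph.fromRel_adj]
  rintro ⟨-, h | h⟩ <;> exact h

lemma subdivide_comm : subdivide G u v = subdivide G v u := by
  ext x y
  cases x with
  | inl a =>
    cases y with
    | inl b =>
      rw [subdivide_adj_inl_inl, subdivide_adj_inl_inl]
      constructor
      · rintro ⟨h, h1, h2⟩; exact ⟨h, h2, h1⟩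
      · rintro ⟨h, h1, h2⟩; exact ⟨h, h2, h1⟩
    | inr t =>
      rw [subdivide_adj_inl_inr, subdivide_adj_inl_inr, or_comm]
  | inr t =>
    cases y with
    | inl b =>
      rw [SimpleGraph.adj_comm, SimpleGraph.adj_comm (subdivide G v u)]
      rw [subdivide_adj_inl_inr, subdivide_adj_inl_inr, or_comm]
    | inr t' =>
      constructor
      · intro h; exact absurd h (subdivide_adj_inr_inr G u v t t')
      · intro h; exact absurd h (subdivide_adj_inr_inr G v u t t')

end Subdivide

section SubdivideDegree

variable {V : Type*} [Fintype V] [DecidableEq V] (G : SimpleGraph V) {u v : V}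

lemma subdivide_degree_inr (huv : u ≠ v) :
    (subdivide G u v).degree (Sum.inr ()) = 2 := by
  have hnb : (subdivide G u v).neighborFinset (Sum.inr ())
      = {Sum.inl u, Sum.inl v} := by
    ext x
    rw [SimpleGraph.mem_neighborFinset]
    cases x with
    | inl b =>
      rw [SimpleGraph.adj_comm, subdivide_adj_inl_inr]
      simp [eq_comm]
    | inr t =>
      simp only [Finset.mem_insert, Finset.mem_singleton]
      constructor
      · intro h; exact absurd h (subdivide_adj_inr_inr G u v _ _)
      · rintro (h | h) <;> exact absurd h (by simp)
  rw [← SimpleGraph.card_neighborFinset_eq_degree, hnb]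
  rw [Finset.card_insert_of_notMem (by simp [huv]), Finset.card_singleton]

lemma subdivide_degree_inl_left (huv : G.Adj u v) :
    (subdivide G u v).degree (Sum.inl u) = G.degree u := by
  have hne : u ≠ v := huv.ne
  have hnb : (subdivide G u v).neighborFinset (Sum.inl u)
      = insert (Sum.inr ()) (((G.neighborFinset u).erase v).image Sum.inl) := by
    ext x
    rw [SimpleGraph.mem_neighborFinset]
    cases x with
    | inl b =>
      rw [subdivide_adj_inl_inl]
      simp only [Finset.mem_insert, Finset.mem_image, Finset.mem_erase,
        SimpleGraph.mem_neighborFinset]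
      constructor
      · rintro ⟨hab, h1, -⟩
        refine Or.inr ⟨b, ⟨?_, hab⟩, rfl⟩
        intro hbv
        exact h1 ⟨by trivial, hbv⟩
      · rintro (h | ⟨b', ⟨hbv, hab⟩, hb'⟩)
        · exact absurd h (by simp)
        · obtain rfl : b' = b := Sum.inl_injective hb'
          exact ⟨hab, fun hh => hbv hh.2, fun hh => hne hh.1⟩
    | inr t =>
      rw [subdivide_adj_inl_inr]
      simp
  rw [← SimpleGraph.card_neighborFinset_eq_degree, hnb]
  rw [Finset.card_insert_of_notMem (by simp)]
  rw [Finset.card_image_of_injective _ Sum.inl_injective]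
  rw [Finset.card_erase_of_mem (by rwa [SimpleGraph.mem_neighborFinset])]
  rw [← SimpleGraph.card_neighborFinset_eq_degree]
  have hpos : 0 < (G.neighborFinset u).card := by
    rw [Finset.card_pos]
    exact ⟨v, by rwa [SimpleGraph.mem_neighborFinset]⟩
  omega

lemma subdivide_degree_inl (huv : G.Adj u v) (z : V) :
    (subdivide G u v).degree (Sum.inl z) = G.degree z := by
  by_cases hzu : z = u
  · subst hzu; exact subdivide_degree_inl_left G huv
  by_cases hzv : z = v
  · subst hzv
    rw [subdivide_comm]
    exact subdivide_degree_inl_left G huv.symm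
  have hnb : (subdivide G u v).neighborFinset (Sum.inl z)
      = (G.neighborFinset z).image Sum.inl := by
    ext x
    rw [SimpleGraph.mem_neighborFinset]
    cases x with
    | inl b =>
      rw [subdivide_adj_inl_inl]
      simp only [Finset.mem_image, SimpleGraph.mem_neighborFinset]
      constructor
      · rintro ⟨hab, -, -⟩; exact ⟨b, hab, rfl⟩
      · rintro ⟨b', hab, hb'⟩
        obtain rfl : b' = b := Sum.inl_injective hb'
        exact ⟨hab, fun hh => hzu hh.1, fun hh => hzv hh.1⟩
    | inr t =>
      rw [subdivide_adj_inl_inr]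
      simp only [Finset.mem_image]
      constructor
      · rintro (h | h) <;> [exact absurd h hzu; exact absurd h hzv]
      · rintro ⟨b', -, hb'⟩
        exact absurd hb' (by simp)
  rw [← SimpleGraph.card_neighborFinset_eq_degree, hnb,
    Finset.card_image_of_injective _ Sum.inl_injective,
    SimpleGraph.card_neighborFinset_eq_degree]

end SubdivideDegree

section CycleFacts

variable {V : Type*} {G : SimpleGraph V}

lemma exists_last_edge {x y : V} (q : G.Walk x y) :
    ¬ q.Nil → ∃ p, s(p, y) ∈ q.edges := by
  induction q with
  | nil => intro h; exact absurd SimpleGraph.Walk.Nil.nil h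
  | @cons a m b hadj r ih =>
    intro _
    cases r with
    | nil => exact ⟨a, by simp⟩
    | cons hadj' r' =>
      obtain ⟨p, hp⟩ := ih SimpleGraph.Walk.not_nil_cons
      refine ⟨p, ?_⟩
      rw [SimpleGraph.Walk.edges_cons, List.mem_cons]
      right
      exact hp

lemma cycle_nbrs {a w : V} {c : G.Walk a a} (hc : c.IsCycle)
    (hw : w ∈ c.support) : ∃ v p : V, v ≠ p ∧ s(w, v) ∈ c.edges ∧ s(w, p) ∈ c.edges := by
  have hrot : (c.rotate w hw).IsCycle := hc.rotate hw
  have hmem : ∀ e, e ∈ (c.rotate w hw).edges → e ∈ c.edges :=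
    fun e he => (c.rotate_edges w hw).mem_iff.mp he
  set d := c.rotate w hw with hd
  clear_value d
  cases d with
  | nil => exact absurd hrot (SimpleGraph.Walk.IsCycle.not_of_nil)
  | @cons _ v _ hadj q =>
    have hq : ¬ q.Nil := SimpleGraph.Walk.not_nil_of_ne (fun h => hadj.ne h.symm)
    obtain ⟨p, hp⟩ := exists_last_edge q hq
    refine ⟨v, p, ?_, ?_, ?_⟩
    · intro hvp
      subst hvp
      have hnd := hrot.edges_nodup
      rw [SimpleGraph.Walk.edges_cons, List.nodup_cons] at hnd
      exact hnd.1 (by rwa [Sym2.eq_swap] at hp)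
    · exact hmem _ (by simp)
    · refine hmem _ ?_
      rw [SimpleGraph.Walk.edges_cons, List.mem_cons]
      right
      rwa [Sym2.eq_swap]

lemma two_le_degree_of_mem_cycle [Fintype V] [DecidableEq V] {a w : V} {c : G.Walk a a}
    (hc : c.IsCycle) (hw : w ∈ c.support) : 2 ≤ G.degree w := by
  obtain ⟨v, p, hvp, hv, hp⟩ := cycle_nbrs hc hw
  have hsub : {v, p} ⊆ G.neighborFinset w := by
    intro z hz
    rw [Finset.mem_insert, Finset.mem_singleton] at hz
    rw [SimpleGraph.mem_neighborFinset]
    rcases hz with rfl | rfl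
    · exact c.adj_of_mem_edges hv
    · exact c.adj_of_mem_edges hp
  calc 2 = ({v, p} : Finset V).card := (Finset.card_pair hvp).symm
    _ ≤ (G.neighborFinset w).card := Finset.card_le_card hsub
    _ = G.degree w := SimpleGraph.card_neighborFinset_eq_degree G w

end CycleFacts

theorem stmt_10 {V : Type*} [Fintype V] [DecidableEq V]
    (G : SimpleGraph V) (hconn : G.Connected)
    (f : ℝ → ℝ → ℝ)
    (hpos : ∀ x y : ℝ, 0 < x → 0 < y → 0 < f x y)
    (hsymm : ∀ x y : ℝ, f x y = f y x)
    (hmono : ∀ y : ℝ, Monotone fun x => f x y)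
    (a : V) (c : G.Walk a a) (hc : c.IsCycle) :
    ∃ u v : V, s(u, v) ∈ c.edges ∧
      specRad (fAdj (subdivide G u v) f) ≤ specRad (fAdj G f) := by
  classical
  haveI : Nonempty V := ⟨a⟩
  obtain ⟨ρ₀, x, hρ₀, hx, hAx⟩ := exists_perron G hconn f hpos hsymm
  have hsupp : a ∈ c.support := SimpleGraph.Walk.start_mem_support c
  obtain ⟨u, huS, humin⟩ := Finset.exists_min_image c.support.toFinset x
    ⟨a, List.mem_toFinset.mpr hsupp⟩
  have hu : u ∈ c.support := List.mem_toFinset.mp huS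
  obtain ⟨v, p, hvp, hev, hep⟩ := cycle_nbrs hc hu
  have huv : G.Adj u v := c.adj_of_mem_edges hev
  have hup : G.Adj u p := c.adj_of_mem_edges hep
  have hvs : v ∈ c.support := c.snd_mem_support_of_mem_edges hev
  have hps : p ∈ c.support := c.snd_mem_support_of_mem_edges hep
  have hxv : x u ≤ x v := humin v (List.mem_toFinset.mpr hvs)
  have hxp : x u ≤ x p := humin p (List.mem_toFinset.mpr hps)
  have hdu2 : (2:ℝ) ≤ (G.degree u : ℝ) := by
    exact_mod_cast two_le_degree_of_mem_cycle hc hu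
  have hdv2 : (2:ℝ) ≤ (G.degree v : ℝ) := by
    exact_mod_cast two_le_degree_of_mem_cycle hc hvs
  have hdp2 : (2:ℝ) ≤ (G.degree p : ℝ) := by
    exact_mod_cast two_le_degree_of_mem_cycle hc hps
  have hdu0 : (0:ℝ) < (G.degree u : ℝ) := lt_of_lt_of_le two_pos hdu2
  have hdv0 : (0:ℝ) < (G.degree v : ℝ) := lt_of_lt_of_le two_pos hdv2
  have hdp0 : (0:ℝ) < (G.degree p : ℝ) := lt_of_lt_of_le two_pos hdp2
  refine ⟨u, v, hev, ?_⟩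
  set A := fAdj G f with hA
  set H := subdivide G u v with hH
  set B := fAdj H f with hB
  have hAdef : ∀ z b, A z b = if G.Adj z b then f (G.degree z) (G.degree b) else 0 :=
    fun z b => rfl
  have hAnn : ∀ i j, 0 ≤ A i j := fAdj_nonneg G f hpos
  have hdegl : ∀ z, H.degree (Sum.inl z) = G.degree z := subdivide_degree_inl G huv
  have hdegr : H.degree (Sum.inr ()) = 2 := subdivide_degree_inr G huv.ne
  have hBll : ∀ a b : V, B (Sum.inl a) (Sum.inl b) =
      if G.Adj a b ∧ ¬(a = u ∧ b = v) ∧ ¬(a = v ∧ b = u)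
      then f (G.degree a) (G.degree b) else 0 := by
    intro a b
    show (if H.Adj (Sum.inl a) (Sum.inl b)
      then f (H.degree (Sum.inl a)) (H.degree (Sum.inl b)) else 0) = _
    rw [hdegl, hdegl]
    exact if_congr (subdivide_adj_inl_inl G u v a b) rfl rfl
  have hBlr : ∀ a : V, B (Sum.inl a) (Sum.inr ()) =
      if a = u ∨ a = v then f (G.degree a) 2 else 0 := by
    intro a
    show (if H.Adj (Sum.inl a) (Sum.inr ())
      then f (H.degree (Sum.inl a)) (H.degree (Sum.inr ())) else 0) = _
    rw [hdegl, hdegr]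
    have : ((2:ℕ):ℝ) = (2:ℝ) := by norm_num
    rw [this]
    exact if_congr (subdivide_adj_inl_inr G u v a ()) rfl rfl
  have hBrl : ∀ b : V, B (Sum.inr ()) (Sum.inl b) =
      if b = u ∨ b = v then f 2 (G.degree b) else 0 := by
    intro b
    show (if H.Adj (Sum.inr ()) (Sum.inl b)
      then f (H.degree (Sum.inr ())) (H.degree (Sum.inl b)) else 0) = _
    rw [hdegl, hdegr]
    have : ((2:ℕ):ℝ) = (2:ℝ) := by norm_num
    rw [this]
    refine if_congr ?_ rfl rfl
    rw [SimpleGraph.adj_comm]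
    exact subdivide_adj_inl_inr G u v b ()
  have hBrr : B (Sum.inr ()) (Sum.inr ()) = 0 := by
    show (if H.Adj (Sum.inr ()) (Sum.inr ()) then _ else 0) = 0
    rw [if_neg (subdivide_adj_inr_inr G u v () ())]
  have hBll_u : ∀ b, B (Sum.inl u) (Sum.inl b) = if b = v then 0 else A u b := by
    intro b
    rw [hBll, hAdef]
    by_cases hb : b = v
    · subst hb
      rw [if_pos rfl, if_neg (fun hh => hh.2.1 ⟨rfl, rfl⟩)]
    · rw [if_neg hb]
      refine if_congr ?_ rfl rfl
      constructor
      · rintro ⟨h, -, -⟩; exact h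
      · intro h; exact ⟨h, fun hh => hb hh.2, fun hh => huv.ne hh.1⟩
  have hBll_v : ∀ b, B (Sum.inl v) (Sum.inl b) = if b = u then 0 else A v b := by
    intro b
    rw [hBll, hAdef]
    by_cases hb : b = u
    · subst hb
      rw [if_pos rfl, if_neg (fun hh => hh.2.2 ⟨rfl, rfl⟩)]
    · rw [if_neg hb]
      refine if_congr ?_ rfl rfl
      constructor
      · rintro ⟨h, -, -⟩; exact h
      · intro h; exact ⟨h, fun hh => huv.ne hh.1.symm, fun hh => hb hh.2⟩
  have hBll_z : ∀ z b, z ≠ u → z ≠ v → B (Sum.inl z) (Sum.inl b) = A z b := by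
    intro z b hzu hzv
    rw [hBll, hAdef]
    refine if_congr ?_ rfl rfl
    constructor
    · rintro ⟨h, -, -⟩; exact h
    · intro h; exact ⟨h, fun hh => hzu hh.1, fun hh => hzv hh.1⟩
  set y : V ⊕ Unit → ℝ := Sum.elim x (fun _ => x u) with hy'
  have hy : ∀ i, 0 < y i := by
    intro i
    cases i with
    | inl z => exact hx z
    | inr t => exact hx u
  have hAxi : ∀ z, ∑ b, A z b * x b = ρ₀ * x z := by
    intro z
    rw [← mulVec_apply', hAx]
    simp
  have hsplit : ∀ i : V ⊕ Unit, (B *ᵥ y) i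
      = (∑ b, B i (Sum.inl b) * x b) + B i (Sum.inr ()) * x u := by
    intro i
    rw [mulVec_apply', Fintype.sum_sum_type]
    simp [hy']
  -- the key entrywise inequality
  have hkey : ∀ i, (B *ᵥ y) i ≤ ρ₀ * y i := by
    intro i
    cases i with
    | inl z =>
      rw [hsplit]
      by_cases hzu : z = u
      · have hzu' : u = z := hzu.symm
        subst hzu'
        have hsum : ∑ b, B (Sum.inl u) (Sum.inl b) * x b
            = (∑ b, A u b * x b) - A u v * x v := by
          have hterm : ∀ b, B (Sum.inl u) (Sum.inl b) * x b
              = A u b * x b - (if b = v then A u v * x v else 0) := by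
            intro b
            rw [hBll_u]
            by_cases hb : b = v
            · subst hb; simp
            · simp [hb]
          rw [Finset.sum_congr rfl fun b _ => hterm b, Finset.sum_sub_distrib,
            Finset.sum_ite_eq' Finset.univ v (fun _ => A u v * x v)]
          simp
        rw [hsum, hBlr, if_pos (Or.inl rfl)]
        have hcoef : f (G.degree u) 2 ≤ A u v := by
          rw [hAdef, if_pos huv]
          calc f (G.degree u) 2 = f 2 (G.degree u) := hsymm _ _
            _ ≤ f (G.degree v) (G.degree u) := hmono _ hdv2
            _ = f (G.degree u) (G.degree v) := hsymm _ _
        have hfnn : 0 ≤ A u v := hAnn u v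
        have hmul : f (G.degree u) 2 * x u ≤ A u v * x v :=
          mul_le_mul hcoef hxv (hx u).le hfnn
        have := hAxi u
        rw [hy']
        simp only [Sum.elim_inl]
        linarith
      by_cases hzv : z = v
      · have hzv' : v = z := hzv.symm
        subst hzv'
        have hsum : ∑ b, B (Sum.inl v) (Sum.inl b) * x b
            = (∑ b, A v b * x b) - A v u * x u := by
          have hterm : ∀ b, B (Sum.inl v) (Sum.inl b) * x b
              = A v b * x b - (if b = u then A v u * x u else 0) := by
            intro b
            rw [hBll_v]
            by_cases hb : b = u
            · subst hb; simp
            · simp [hb]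
          rw [Finset.sum_congr rfl fun b _ => hterm b, Finset.sum_sub_distrib,
            Finset.sum_ite_eq' Finset.univ u (fun _ => A v u * x u)]
          simp
        rw [hsum, hBlr, if_pos (Or.inr rfl)]
        have hcoef : f (G.degree v) 2 ≤ A v u := by
          rw [hAdef, if_pos huv.symm]
          calc f (G.degree v) 2 = f 2 (G.degree v) := hsymm _ _
            _ ≤ f (G.degree u) (G.degree v) := hmono _ hdu2
            _ = f (G.degree v) (G.degree u) := hsymm _ _
        have hmul : f (G.degree v) 2 * x u ≤ A v u * x u :=
          mul_le_mul_of_nonneg_right hcoef (hx u).le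
        have := hAxi v
        rw [hy']
        simp only [Sum.elim_inl]
        linarith
      · have hsum : ∑ b, B (Sum.inl z) (Sum.inl b) * x b = ∑ b, A z b * x b :=
          Finset.sum_congr rfl fun b _ => by rw [hBll_z z b hzu hzv]
        rw [hsum, hBlr, if_neg (by tauto), zero_mul, add_zero, hAxi z, hy']
        simp only [Sum.elim_inl]
        exact le_refl _
    | inr t =>
      cases t
      rw [hsplit, hBrr, zero_mul, add_zero]
      have hsum : ∑ b, B (Sum.inr ()) (Sum.inl b) * x b
          = f 2 (G.degree u) * x u + f 2 (G.degree v) * x v := by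
        have hterm : ∀ b, B (Sum.inr ()) (Sum.inl b) * x b
            = (if b = u then f 2 (G.degree u) * x u else 0)
              + (if b = v then f 2 (G.degree v) * x v else 0) := by
          intro b
          rw [hBrl]
          by_cases h1 : b = u
          · subst h1; simp [huv.ne]
          · by_cases h2 : b = v
            · subst h2; simp [h1]
            · simp [h1, h2]
        rw [Finset.sum_congr rfl fun b _ => hterm b, Finset.sum_add_distrib,
          Finset.sum_ite_eq' Finset.univ u (fun _ => f 2 (G.degree u) * x u),
          Finset.sum_ite_eq' Finset.univ v (fun _ => f 2 (G.degree v) * x v)]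
        simp
      rw [hsum]
      have hlow : A u p * x p + A u v * x v ≤ ∑ b, A u b * x b := by
        have hpair : ({p, v} : Finset V).sum (fun b => A u b * x b)
            = A u p * x p + A u v * x v := Finset.sum_pair (fun h => hvp h.symm)
        rw [← hpair]
        refine Finset.sum_le_sum_of_subset_of_nonneg (Finset.subset_univ _) ?_
        intro b _ _
        exact mul_nonneg (hAnn u b) (hx b).le
      have h1 : f 2 (G.degree u) * x u ≤ A u p * x p := by
        have hcoef : f 2 (G.degree u) ≤ A u p := by
          rw [hAdef, if_pos hup]
          calc f 2 (G.degree u) ≤ f (G.degree p) (G.degree u) := hmono _ hdp2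
            _ = f (G.degree u) (G.degree p) := hsymm _ _
        exact mul_le_mul hcoef hxp (hx u).le (hAnn u p)
      have h2 : f 2 (G.degree v) * x v ≤ A u v * x v := by
        have hcoef : f 2 (G.degree v) ≤ A u v := by
          rw [hAdef, if_pos huv]
          exact hmono _ hdu2
        exact mul_le_mul_of_nonneg_right hcoef (hx v).le
      have := hAxi u
      rw [hy']
      simp only [Sum.elim_inr]
      linarith
  have hBnn : ∀ i j, 0 ≤ B i j := fAdj_nonneg H f hpos
  have hBsym : ∀ i j, B i j = B j i := fAdj_symm H f hsymm
  have hxne : x ≠ 0 := by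
    intro h
    exact (hx u).ne' (congrFun h u)
  have hle1 : specRad B ≤ ρ₀ := by
    refine specRad_le_of B hBsym hBnn ρ₀ hρ₀ y hy ?_
    intro i
    exact hkey i
  have hle2 : ρ₀ ≤ specRad A := le_specRad_of A ρ₀ hρ₀ x hxne hAx
  exact hle1.trans hle2
end
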